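/- arXiv:2002.12608 — 2 statements merged into one kernel-verified Lean document; each statement's English description precedes it below -/
import Mathlib

section
/- Let R be a non-quasilocal commutative ring and I a proper ideal of R such that the annihilator ann(i) = {r ∈ R : ri = 0} is not a maximal ideal of R for every i ∈ I. Then I is a weakly 1-absorbing primary ideal of R if and only if I is a weakly primary ideal of R. -/
/-!
Let `0 ≠ ab ∈ I` with `a, b` nonunits and `b ∉ √I`. For every nonunit `x` outside `ann(ab)` we
have `0 ≠ xab ∈ I`, so weak 1-absorption gives `xa ∈ I`. As `ann(ab)` is proper but not maximal,
no maximal ideal `P` is contained in it, and the elements of `P` outside `ann(ab)` generate `P`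
additively; hence `P ≤ (I : a)` for every maximal `P`. Two distinct maximal ideals are comaximal,
so `(I : a) = R`, i.e. `a ∈ I`.
-/

open Ideal

def IsWeakly1AbsorbingPrimary {R : Type*} [CommRing R] (I : Ideal R) : Prop :=
  I ≠ ⊤ ∧ ∀ a b c : R, ¬IsUnit a → ¬IsUnit b → ¬IsUnit c →
    a * b * c ∈ I → a * b * c ≠ 0 → a * b ∈ I ∨ c ∈ I.radical

def IsWeaklyPrimary {R : Type*} [CommRing R] (I : Ideal R) : Prop :=
  I ≠ ⊤ ∧ ∀ a b : R, a * b ∈ I → a * b ≠ 0 → a ∈ I ∨ b ∈ I.radical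

def IsWeaklyPrime {R : Type*} [CommRing R] (I : Ideal R) : Prop :=
  I ≠ ⊤ ∧ ∀ a b : R, a * b ∈ I → a * b ≠ 0 → a ∈ I ∨ b ∈ I

theorem Submodule.le_of_forall_mem_of_notMem {R M : Type*} [Ring R] [AddCommGroup M]
    [Module R M] {P A J : Submodule R M} (hPA : ¬P ≤ A) (h : ∀ x ∈ P, x ∉ A → x ∈ J) :
    P ≤ J := by
  obtain ⟨y, hyP, hyA⟩ := SetLike.not_le_iff_exists.mp hPA
  intro x hxP
  by_cases hxA : x ∈ A
  · have hxy : x - y ∉ A := fun hxyA => hyA (by simpa using A.sub_mem hxA hxyA)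
    simpa using J.add_mem (h _ (P.sub_mem hxP hyP) hxy) (h y hyP hyA)
  · exact h x hxP hxA

theorem Ideal.IsMaximal.not_le_of_not_isMaximal {R : Type*} [Semiring R] {P A : Ideal R}
    (hP : P.IsMaximal) (hA : A ≠ ⊤) (hA' : ¬A.IsMaximal) : ¬P ≤ A :=
  fun hle => hA' (hP.eq_of_le hA hle ▸ hP)

theorem IsWeaklyPrimary.isWeakly1AbsorbingPrimary {R : Type*} [CommRing R] {I : Ideal R}
    (hI : IsWeaklyPrimary I) : IsWeakly1AbsorbingPrimary I :=
  ⟨hI.1, fun a b c _ _ _ habc habc0 => hI.2 (a * b) c habc habc0⟩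

namespace IsWeakly1AbsorbingPrimary

variable {R : Type*} [CommRing R] {I : Ideal R} {a b : R}

theorem isMaximal_le_colon (hI : IsWeakly1AbsorbingPrimary I) (ha : ¬IsUnit a)
    (hb : ¬IsUnit b) (hbI : b ∉ I.radical) (hab : a * b ∈ I) (hab0 : a * b ≠ 0)
    (hann : ¬(torsionOf R R (a * b)).IsMaximal) {P : Ideal R} (hP : P.IsMaximal) :
    P ≤ I.colon {a} := by
  have hPA := hP.not_le_of_not_isMaximal (by rwa [Ne, torsionOf_eq_top_iff]) hann
  refine Submodule.le_of_forall_mem_of_notMem hPA fun x hxP hxA => ?_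
  have hx : ¬IsUnit x := fun hu => hP.ne_top (P.eq_top_of_isUnit_mem hxP hu)
  have hxab : x * a * b ≠ 0 := by
    rwa [mul_assoc, ← smul_eq_mul, Ne, ← mem_torsionOf_iff]
  have hxabI : x * a * b ∈ I := by
    rw [mul_assoc]
    exact I.mul_mem_left x hab
  simpa [hbI] using hI.2 x a b hx ha hb hxabI hxab

theorem mem_of_mul_mem (hI : IsWeakly1AbsorbingPrimary I)
    (hnql : ∃ M N : Ideal R, M.IsMaximal ∧ N.IsMaximal ∧ M ≠ N) (ha : ¬IsUnit a)
    (hb : ¬IsUnit b) (hbI : b ∉ I.radical) (hab : a * b ∈ I) (hab0 : a * b ≠ 0)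
    (hann : ¬(torsionOf R R (a * b)).IsMaximal) : a ∈ I := by
  obtain ⟨M, N, hM, hN, hMN⟩ := hnql
  have hcolon : I.colon {a} = ⊤ := top_le_iff.mp <|
    (hM.coprime_of_ne hN hMN).ge.trans <| sup_le
      (hI.isMaximal_le_colon ha hb hbI hab hab0 hann hM)
      (hI.isMaximal_le_colon ha hb hbI hab hab0 hann hN)
  simpa using (Submodule.colon_eq_top_iff_subset _).mp hcolon

theorem isWeaklyPrimary (hI : IsWeakly1AbsorbingPrimary I)
    (hnql : ∃ M N : Ideal R, M.IsMaximal ∧ N.IsMaximal ∧ M ≠ N)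
    (hann : ∀ i ∈ I, ¬(torsionOf R R i).IsMaximal) : IsWeaklyPrimary I := by
  refine ⟨hI.1, fun a b hab hab0 => ?_⟩
  by_cases ha : IsUnit a
  · exact .inr (le_radical ((unit_mul_mem_iff_mem I ha).mp hab))
  by_cases hb : IsUnit b
  · exact .inl ((mul_unit_mem_iff_mem I hb).mp hab)
  by_cases hbI : b ∈ I.radical
  · exact .inr hbI
  exact .inl (hI.mem_of_mul_mem hnql ha hb hbI hab hab0 (hann _ hab))

end IsWeakly1AbsorbingPrimary

theorem stmt6_general {R : Type*} [CommRing R]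
    (hnql : ∃ M N : Ideal R, M.IsMaximal ∧ N.IsMaximal ∧ M ≠ N)
    (I : Ideal R)
    (hann : ∀ i ∈ I, ¬ (Ideal.torsionOf R R i).IsMaximal) :
    IsWeakly1AbsorbingPrimary I ↔ IsWeaklyPrimary I :=
  ⟨fun hI => hI.isWeaklyPrimary hnql hann, IsWeaklyPrimary.isWeakly1AbsorbingPrimary⟩

theorem stmt6 {R : Type*} [CommRing R] [Nontrivial R]
    (hnql : ∃ M N : Ideal R, M.IsMaximal ∧ N.IsMaximal ∧ M ≠ N)
    (I : Ideal R) (hI : I ≠ ⊤)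
    (hann : ∀ i ∈ I, ¬ (Ideal.torsionOf R R i).IsMaximal) :
    IsWeakly1AbsorbingPrimary I ↔ IsWeaklyPrimary I :=
  stmt6_general hnql I hann
end

section
/- Let I be a weakly 1-absorbing primary ideal of a commutative ring R and (a, b, c) a 1-triple-zero of I. Then abI = 0, i.e., abx = 0 for every x ∈ I. -/
open Ideal

theorem IsWeakly1AbsorbingPrimary.mul_mem_or_mem_radical {R : Type*} [CommRing R]
    {I : Ideal R} (h : IsWeakly1AbsorbingPrimary I) {a b c : R}
    (ha : ¬IsUnit a) (hb : ¬IsUnit b) (habc : a * b * c ∈ I) (hne : a * b * c ≠ 0) :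
    a * b ∈ I ∨ c ∈ I.radical := by
  by_cases hc : IsUnit c
  · exact Or.inl ((I.mul_unit_mem_iff_mem hc).mp habc)
  · exact h.2 a b c ha hb hc habc hne

theorem stmt10_general {R : Type*} [CommRing R] (I : Ideal R)
    (h : IsWeakly1AbsorbingPrimary I) (a b c : R)
    (ha : ¬IsUnit a) (hb : ¬IsUnit b)
    (habc : a * b * c = 0) (hab : a * b ∉ I) (hcr : c ∉ I.radical) :
    ∀ x ∈ I, a * b * x = 0 := by
  intro x hx
  by_contra hne
  -- Apply the condition to `c + x`, which may be a unit; hence the lemma above.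
  have hshift : a * b * (c + x) = a * b * x := by rw [mul_add, habc, zero_add]
  rcases h.mul_mem_or_mem_radical ha hb (hshift ▸ I.mul_mem_left _ hx) (hshift ▸ hne) with
    habI | hcx
  · exact hab habI
  · exact hcr (by simpa using sub_mem hcx (le_radical hx))

theorem stmt10 {R : Type*} [CommRing R] [Nontrivial R] (I : Ideal R)
    (h : IsWeakly1AbsorbingPrimary I) (a b c : R)
    (ha : ¬IsUnit a) (hb : ¬IsUnit b) (hc : ¬IsUnit c)
    (habc : a * b * c = 0) (hab : a * b ∉ I) (hcr : c ∉ I.radical) :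
    ∀ x ∈ I, a * b * x = 0 :=
  stmt10_general I h a b c ha hb habc hab hcr
end
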